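/- Let H be a real Hilbert space and assume (H1), (H2) and (H3). If x1, x2 : [T0,T] → H are two absolutely continuous mappings with x1(T0) = x2(T0), x_i(t) ∈ C(t) for all t ∈ [T0,T] (i = 1,2), and −x_i'(t) ∈ N_{C(t)}(x_i(t)) + f1(t, x_i(t)) + ∫_{T0}^t f2(t, s, x_i(s)) ds for almost every t ∈ [T0,T] (i = 1,2), then x1(t) = x2(t) for all t ∈ [T0,T]. -/

import Mathlib

open MeasureTheory Set
open scoped RealInnerProductSpace ENNReal Pointwise NNReal

noncomputable section

variable {H : Type*} [NormedAddCommGroup H] [InnerProductSpace ℝ H]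

/-- The proximal normal cone of `S` at `x`. -/
def proxNormalCone (S : Set H) (x : H) : Set H :=
  {v | ∃ σ : ℝ, 0 ≤ σ ∧ ∃ δ : ℝ, 0 < δ ∧
    ∀ y ∈ S ∩ Metric.ball x δ, ⟪v, y - x⟫ ≤ σ * ‖y - x‖ ^ 2}

/-- Uniform `r`-prox-regularity, `r ∈ (0, ∞]`. -/
def IsProxRegular (r : ℝ≥0∞) (S : Set H) : Prop :=
  ∀ x ∈ S, ∀ v ∈ proxNormalCone S x, v ≠ 0 →
    ∀ y ∈ S, ⟪‖v‖⁻¹ • v, y - x⟫ ≤ ((2 * r)⁻¹).toReal * ‖y - x‖ ^ 2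

variable [CompleteSpace H]

/-- Absolutely continuous solution of the integro-differential sweeping process
`-x'(t) ∈ N_{C(t)}(x(t)) + f1(t, x(t)) + ∫_{T0}^t f2(t, s, x(s)) ds`. -/
def IsIDSweepingSol (T0 T : ℝ) (C : ℝ → Set H) (f1 : ℝ → H → H)
    (f2 : ℝ → ℝ → H → H) (x x' : ℝ → H) : Prop :=
  IntervalIntegrable x' volume T0 T ∧
  (∀ t ∈ Icc T0 T, x t = x T0 + ∫ s in T0..t, x' s) ∧
  (∀ t ∈ Icc T0 T, x t ∈ C t) ∧
  (∀ᵐ t ∂volume, t ∈ Icc T0 T →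
    (-x' t - f1 t (x t) - ∫ s in T0..t, f2 t s (x s)) ∈ proxNormalCone (C t) (x t))

/-!
For two solutions put `D = ‖x₁ - x₂‖`. Since `x₁ - x₂` is the primitive of `u = x₁' - x₂'`,
Fubini gives `D(t)² = 2 ∫_{T0}^t ⟪u, x₁ - x₂⟫`. Writing the normal vectors as `vᵢ = -xᵢ' - pᵢ`
with `pᵢ = f1(t, xᵢ(t)) + ∫_{T0}^t f2(t, s, xᵢ(s)) ds`, prox-regularity makes the normal cone
hypomonotone, `⟪v₂ - v₁, x₁ - x₂⟫ ≤ (‖v₁‖ + ‖v₂‖) ‖x₁ - x₂‖² / (2r)`, and the local Lipschitz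
bounds give `‖p₁ - p₂‖ ≤ L1 D + L2 ∫ D`. Hence `D(t)² ≤ ∫_{T0}^t g(s) D(s) (D(s) + ∫_{T0}^s D)`
with `g` integrable, because the growth bounds make `‖vᵢ‖` integrable. If `D` vanishes on
`[T0, t]`, choose `t' > t` with `∫_t^{t'} g` small: the maximum `N` of `D` on `[t, t']` then
satisfies `N² ≤ N² / 2`, so `D` vanishes on `[T0, t']`, and continuous induction gives `D = 0`.
-/

open Filter Topology

section

variable {E : Type*} [NormedAddCommGroup E] [InnerProductSpace ℝ E]

theorem IsProxRegular.inner_le {r : ℝ≥0∞} {S : Set E} (hS : IsProxRegular r S) {x y v : E}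
    (hx : x ∈ S) (hy : y ∈ S) (hv : v ∈ proxNormalCone S x) :
    ⟪v, y - x⟫ ≤ ‖v‖ * (((2 * r)⁻¹).toReal * ‖y - x‖ ^ 2) := by
  rcases eq_or_ne v 0 with rfl | hv0
  · simp
  have h := hS x hx v hv hv0 y hy
  rwa [real_inner_smul_left, inv_mul_le_iff₀ (norm_pos_iff.mpr hv0)] at h

/-- Hypomonotonicity of the proximal normal cone, for normal vectors `-yᵢ - pᵢ`. -/
theorem IsProxRegular.inner_sub_le {r : ℝ≥0∞} {S : Set E} (hS : IsProxRegular r S)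
    {x₁ x₂ y₁ y₂ p₁ p₂ : E} (hx₁ : x₁ ∈ S) (hx₂ : x₂ ∈ S)
    (h₁ : -y₁ - p₁ ∈ proxNormalCone S x₁) (h₂ : -y₂ - p₂ ∈ proxNormalCone S x₂) :
    ⟪y₁ - y₂, x₁ - x₂⟫ ≤ ((2 * r)⁻¹).toReal * (‖y₁‖ + ‖p₁‖ + (‖y₂‖ + ‖p₂‖)) * ‖x₁ - x₂‖ ^ 2
      + ‖p₁ - p₂‖ * ‖x₁ - x₂‖ := by
  set c := ((2 * r)⁻¹).toReal
  have k₁ := hS.inner_le hx₁ hx₂ h₁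
  have k₂ := hS.inner_le hx₂ hx₁ h₂
  rw [norm_sub_rev x₂] at k₁
  have hv₁ : ‖-y₁ - p₁‖ ≤ ‖y₁‖ + ‖p₁‖ := (norm_sub_le _ _).trans_eq (by rw [norm_neg])
  have hv₂ : ‖-y₂ - p₂‖ ≤ ‖y₂‖ + ‖p₂‖ := (norm_sub_le _ _).trans_eq (by rw [norm_neg])
  have hcw : 0 ≤ c * ‖x₁ - x₂‖ ^ 2 := by positivity
  have hsplit : ⟪y₁ - y₂, x₁ - x₂⟫
      = ⟪-y₁ - p₁, x₂ - x₁⟫ + ⟪-y₂ - p₂, x₁ - x₂⟫ - ⟪p₁ - p₂, x₁ - x₂⟫ := by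
    rw [← neg_sub x₁ x₂, inner_neg_right]
    simp only [inner_sub_left, inner_neg_left]
    ring
  have hp := real_inner_le_norm (p₂ - p₁) (x₁ - x₂)
  rw [← neg_sub p₁ p₂, inner_neg_left, norm_neg] at hp
  nlinarith [mul_le_mul_of_nonneg_right hv₁ hcw, mul_le_mul_of_nonneg_right hv₂ hcw]

end

section

variable {X Y : Type*} [TopologicalSpace X] {μ : Measure ℝ}

theorem aestronglyMeasurable_comp_of_continuousOn [TopologicalSpace Y]
    [TopologicalSpace.PseudoMetrizableSpace Y] {F : ℝ → X → Y} {x : ℝ → X} {K : Set X} {a b : ℝ}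
    (hab : a ≤ b) (hF : ∀ y, StronglyMeasurable fun σ => F σ y)
    (hFK : ∀ σ ∈ Icc a b, ContinuousOn (F σ) K) (hx : ContinuousOn x (Icc a b))
    (hxK : MapsTo x (Icc a b) K) :
    AEStronglyMeasurable (fun σ => F σ (x σ)) (μ.restrict (Icc a b)) := by
  set p : ℝ → ℝ := fun σ => max a (min b σ)
  have hp : ∀ σ, p σ ∈ Icc a b := fun σ => ⟨le_max_left _ _, max_le hab (min_le_left _ _)⟩
  have hpc : Continuous p := by fun_prop
  -- Precomposing with the retraction `p` onto `[a, b]` makes `F` continuous in space everywhere.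
  have huncurry : StronglyMeasurable (Function.uncurry fun τ σ => F (p σ) (x (p τ))) :=
    stronglyMeasurable_uncurry_of_continuous_of_stronglyMeasurable
      (fun σ => (hFK _ (hp σ)).comp_continuous (hx.comp_continuous hpc hp) fun τ => hxK (hp τ))
      (fun τ => (hF _).comp_measurable hpc.measurable)
  refine (huncurry.comp_measurable (measurable_id.prodMk measurable_id)).aestronglyMeasurable.congr
    ?_
  filter_upwards [ae_restrict_mem measurableSet_Icc] with σ hσ
  simp [p, max_eq_right hσ.1, min_eq_right hσ.2]

theorem integrableOn_comp_of_continuousOn [NormedAddCommGroup Y] {F : ℝ → X → Y} {x : ℝ → X}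
    {K : Set X} {β : ℝ → ℝ} {a b : ℝ} (hab : a ≤ b) (hF : ∀ y, StronglyMeasurable fun σ => F σ y)
    (hFK : ∀ σ ∈ Icc a b, ContinuousOn (F σ) K) (hx : ContinuousOn x (Icc a b))
    (hxK : MapsTo x (Icc a b) K) (hβ : IntegrableOn β (Icc a b) μ)
    (hle : ∀ σ ∈ Icc a b, ‖F σ (x σ)‖ ≤ β σ) :
    IntegrableOn (fun σ => F σ (x σ)) (Icc a b) μ :=
  hβ.mono' (aestronglyMeasurable_comp_of_continuousOn hab hF hFK hx hxK)
    (ae_restrict_of_forall_mem measurableSet_Icc hle)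

end

section

variable {E : Type*} [NormedAddCommGroup E] [InnerProductSpace ℝ E]

theorem integrableOn_inner_primitive {u : ℝ → E} {a b : ℝ} (hu : IntegrableOn u (Ioc a b)) :
    IntegrableOn (fun s => ⟪u s, ∫ σ in Ioc a s, u σ⟫) (Ioc a b) := by
  rcases le_or_gt b a with hba | hab
  · simp [Ioc_eq_empty_of_le hba]
  have hF : ContinuousOn (fun s => ∫ σ in Ioc a s, u σ) (Icc a b) :=
    intervalIntegral.continuousOn_primitive ((integrableOn_Icc_iff_integrableOn_Ioc).mpr hu)
  obtain ⟨M, hM⟩ := isCompact_Icc.exists_bound_of_continuousOn hF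
  refine (hu.norm.mul_const M).mono'
    (hu.aestronglyMeasurable.inner ((hF.mono Ioc_subset_Icc_self).aestronglyMeasurable
      measurableSet_Ioc)) (ae_restrict_of_forall_mem measurableSet_Ioc fun s hs => ?_)
  exact (norm_inner_le_norm _ _).trans
    (mul_le_mul_of_nonneg_left (hM s (Ioc_subset_Icc_self hs)) (norm_nonneg _))

theorem integrable_indicator_Ioi_inner {u : ℝ → E} {μ : Measure ℝ} [SFinite μ]
    (hu : Integrable u μ) :
    Integrable (Function.uncurry fun s σ => (Ioi s).indicator (fun σ => ⟪u σ, u s⟫) σ)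
      (μ.prod μ) := by
  have heq : (Function.uncurry fun s σ => (Ioi s).indicator (fun σ => ⟪u σ, u s⟫) σ)
      = {p : ℝ × ℝ | p.1 < p.2}.indicator fun p => ⟪u p.2, u p.1⟫ := by
    ext p; simp [indicator, Function.uncurry]
  rw [heq]
  refine ((hu.norm.mul_prod hu.norm).mono'
    ((hu.aestronglyMeasurable.comp_snd).inner (𝕜 := ℝ) hu.aestronglyMeasurable.comp_fst)
    (Eventually.of_forall fun p => ?_)).indicator (measurableSet_lt measurable_fst measurable_snd)
  simpa [mul_comm] using norm_inner_le_norm (𝕜 := ℝ) (u p.2) (u p.1)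

theorem norm_setIntegral_Ioc_sq_eq_two_mul_integral_inner [CompleteSpace E] {u : ℝ → E}
    {a b : ℝ} (hu : IntegrableOn u (Ioc a b)) :
    ‖∫ s in Ioc a b, u s‖ ^ 2 = 2 * ∫ s in Ioc a b, ⟪u s, ∫ σ in Ioc a s, u σ⟫ := by
  set μ := volume.restrict (Ioc a b)
  set F : ℝ → E := fun s => ∫ σ in Ioc a s, u σ
  have hμu : Integrable u μ := hu
  set k : ℝ → ℝ → ℝ := fun s σ => (Ioi s).indicator (fun σ => ⟪u σ, u s⟫) σ
  have hk : Integrable (Function.uncurry k) (μ.prod μ) := integrable_indicator_Ioi_inner hu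
  -- Fubini on `{s < σ}`: integrating `k` over `σ` gives `⟪F b - F s, u s⟫`,
  -- over `s` it gives `⟪u σ, F σ⟫`.
  have hσ : ∀ᵐ s ∂μ, ∫ σ, k s σ ∂μ = ⟪F b - F s, u s⟫ := by
    filter_upwards [ae_restrict_mem measurableSet_Ioc] with s hs
    have hsplit : F b - F s = ∫ σ in Ioc s b, u σ := by
      rw [sub_eq_iff_eq_add', ← setIntegral_union (Ioc_disjoint_Ioc_of_le le_rfl) measurableSet_Ioc
        (hu.mono_set (Ioc_subset_Ioc_right hs.2)) (hu.mono_set (Ioc_subset_Ioc_left hs.1.le)),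
        Ioc_union_Ioc_eq_Ioc hs.1.le hs.2]
    rw [integral_indicator measurableSet_Ioi, Measure.restrict_restrict measurableSet_Ioi,
      inter_comm, Ioc_inter_Ioi, sup_eq_right.mpr hs.1.le, hsplit, real_inner_comm,
      ← integral_inner (hu.mono_set (Ioc_subset_Ioc_left hs.1.le))]
    simp only [real_inner_comm (u s)]
  have hs : ∀ᵐ σ ∂μ, ∫ s, k s σ ∂μ = ⟪u σ, F σ⟫ := by
    filter_upwards [ae_restrict_mem measurableSet_Ioc] with σ hσ
    have hind : (fun s => k s σ) = (Iio σ).indicator fun s => ⟪u σ, u s⟫ := by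
      ext s; simp [k, indicator]
    have hset : Iio σ ∩ Ioc a b = Ioo a σ := by
      ext z; simp only [mem_inter_iff, mem_Iio, mem_Ioc, mem_Ioo]; grind
    rw [hind, integral_indicator measurableSet_Iio, Measure.restrict_restrict measurableSet_Iio,
      hset, setIntegral_congr_set Ioo_ae_eq_Ioc,
      integral_inner (hu.mono_set (Ioc_subset_Ioc_right hσ.2))]
  have hFs : Integrable (fun s => ⟪F s, u s⟫) μ :=
    (integrableOn_inner_primitive hu).congr
      (Eventually.of_forall fun s => real_inner_comm (F s) (u s))
  calc ‖F b‖ ^ 2 = ∫ s, ⟪F b, u s⟫ ∂μ := by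
        rw [integral_inner hu, ← real_inner_self_eq_norm_sq]
    _ = ∫ s, ⟪F s, u s⟫ ∂μ + ∫ s, ⟪F b - F s, u s⟫ ∂μ := by
        rw [← integral_add hFs (((hu.const_inner (F b)).sub hFs).congr
          (Eventually.of_forall fun s => (inner_sub_left _ _ _).symm))]
        simp only [inner_sub_left, add_sub_cancel]
    _ = 2 * ∫ s, ⟪u s, F s⟫ ∂μ := by
        rw [← integral_congr_ae hσ, integral_integral_swap hk, integral_congr_ae hs]
        simp only [real_inner_comm (F _)]
        ring

end

theorem MeasureTheory.IntegrableOn.intervalIntegrable_of_Icc_subset {E : Type*}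
    [NormedAddCommGroup E] {f : ℝ → E} {μ : Measure ℝ} {a b c d : ℝ}
    (hf : IntegrableOn f (Icc a b) μ) (hcd : c ≤ d)
    (h : Icc c d ⊆ Icc a b) : IntervalIntegrable f μ c d :=
  (hf.mono_set (by rwa [uIcc_of_le hcd])).intervalIntegrable

theorem eventually_nhdsGT_intervalIntegral_lt {g : ℝ → ℝ} {t b ε : ℝ} (htb : t < b)
    (hg : IntegrableOn g (Icc t b)) (hε : 0 < ε) :
    ∀ᶠ u in 𝓝[>] t, ∫ s in t..u, g s < ε := by
  have hcont := intervalIntegral.continuousOn_primitive_interval (a := t) (b := b)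
    (by rwa [uIcc_of_le htb.le])
  rw [uIcc_of_le htb.le] at hcont
  have h := (hcont t (left_mem_Icc.mpr htb.le)).eventually (gt_mem_nhds (a := ε) (by simpa))
  rw [← nhdsWithin_Ioo_eq_nhdsGT htb]
  exact nhdsWithin_mono _ Ioo_subset_Icc_self h

section Gronwall

variable {D g : ℝ → ℝ} {a b : ℝ}

theorem continuousOn_mul_add_primitive (hD : ContinuousOn D (Icc a b)) :
    ContinuousOn (fun s => D s * (D s + ∫ σ in a..s, D σ)) (Icc a b) := by
  rcases le_or_gt a b with hab | hba
  · have hprim := intervalIntegral.continuousOn_primitive_interval (μ := volume)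
      (uIcc_of_le hab ▸ hD.integrableOn_Icc)
    rw [uIcc_of_le hab] at hprim
    exact hD.mul (hD.add hprim)
  · simp [Icc_eq_empty_of_lt hba]

theorem intervalIntegrable_mul_mul_add_primitive (hD : ContinuousOn D (Icc a b))
    (hg : IntegrableOn g (Icc a b)) {c d : ℝ} (hcd : c ≤ d) (h : Icc c d ⊆ Icc a b) :
    IntervalIntegrable (fun s => g s * (D s * (D s + ∫ σ in a..s, D σ))) volume c d :=
  IntegrableOn.intervalIntegrable_of_Icc_subset
    (hg.mul_continuousOn (continuousOn_mul_add_primitive hD) isCompact_Icc) hcd h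

theorem mul_add_primitive_nonneg (hD0 : ∀ t ∈ Icc a b, 0 ≤ D t) {s : ℝ} (hs : s ∈ Icc a b) :
    0 ≤ D s * (D s + ∫ σ in a..s, D σ) :=
  mul_nonneg (hD0 s hs) (add_nonneg (hD0 s hs)
    (intervalIntegral.integral_nonneg hs.1 fun σ hσ => hD0 σ ⟨hσ.1, hσ.2.trans hs.2⟩))

theorem mul_add_primitive_le (hD : ContinuousOn D (Icc a b)) (hD0 : ∀ t ∈ Icc a b, 0 ≤ D t)
    {c N : ℝ} (hcb : c ≤ b) (hDN : ∀ s ∈ Icc a c, D s ≤ N) {s : ℝ} (hs : s ∈ Icc a c) :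
    D s * (D s + ∫ σ in a..s, D σ) ≤ (1 + (b - a)) * N ^ 2 := by
  have hsub : Icc a s ⊆ Icc a b := Icc_subset_Icc_right (hs.2.trans hcb)
  have hDs : 0 ≤ D s := hD0 s (hsub (right_mem_Icc.mpr hs.1))
  have hN : 0 ≤ N := hDs.trans (hDN s hs)
  have hint0 : 0 ≤ ∫ σ in a..s, D σ :=
    intervalIntegral.integral_nonneg hs.1 fun σ hσ => hD0 σ (hsub hσ)
  have hint : ∫ σ in a..s, D σ ≤ (b - a) * N := by
    calc ∫ σ in a..s, D σ ≤ ∫ _ in a..s, N :=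
          intervalIntegral.integral_mono_on hs.1
            ((hD.mono hsub).intervalIntegrable_of_Icc hs.1) intervalIntegrable_const
            fun σ hσ => hDN σ ⟨hσ.1, hσ.2.trans hs.2⟩
      _ = (s - a) * N := by simp
      _ ≤ (b - a) * N := by gcongr; linarith [hs.2]
  calc D s * (D s + ∫ σ in a..s, D σ) ≤ N * (N + (b - a) * N) := by
        gcongr
        · exact hDN s hs
        · exact hDN s hs
    _ = (1 + (b - a)) * N ^ 2 := by ring

theorem integral_mul_mul_add_primitive_le (hD : ContinuousOn D (Icc a b))
    (hD0 : ∀ t ∈ Icc a b, 0 ≤ D t) (hg : IntegrableOn g (Icc a b)) (hg0 : ∀ t ∈ Icc a b, 0 ≤ g t)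
    {t t₀ t' N : ℝ} (ht : a ≤ t) (htt₀ : t ≤ t₀) (ht₀t' : t₀ ≤ t') (ht'b : t' ≤ b)
    (hzero : ∀ s ∈ Icc a t, D s = 0) (hDN : ∀ s ∈ Icc a t', D s ≤ N) :
    ∫ s in a..t₀, g s * (D s * (D s + ∫ σ in a..s, D σ))
      ≤ (1 + (b - a)) * N ^ 2 * ∫ s in t..t', g s := by
  have hφ₀ := intervalIntegrable_mul_mul_add_primitive hD hg ht
    (Icc_subset_Icc_right (htt₀.trans (ht₀t'.trans ht'b)))
  have hφ₁ := intervalIntegrable_mul_mul_add_primitive hD hg htt₀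
    (Icc_subset_Icc ht (ht₀t'.trans ht'b))
  have hφ_zero : ∫ s in a..t, g s * (D s * (D s + ∫ σ in a..s, D σ)) = 0 := by
    rw [intervalIntegral.integral_congr (g := 0) fun s hs => by
      rw [uIcc_of_le ht] at hs; simp [hzero s hs]]
    simp
  calc ∫ s in a..t₀, g s * (D s * (D s + ∫ σ in a..s, D σ))
      = ∫ s in t..t₀, g s * (D s * (D s + ∫ σ in a..s, D σ)) := by
        rw [← intervalIntegral.integral_add_adjacent_intervals hφ₀ hφ₁, hφ_zero, zero_add]
    _ ≤ ∫ s in t..t₀, (1 + (b - a)) * N ^ 2 * g s := by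
        refine intervalIntegral.integral_mono_on htt₀ hφ₁ ((hg.intervalIntegrable_of_Icc_subset
          htt₀ (Icc_subset_Icc ht (ht₀t'.trans ht'b))).const_mul _) fun s hs => ?_
        have hs' : s ∈ Icc a b := ⟨ht.trans hs.1, hs.2.trans (ht₀t'.trans ht'b)⟩
        rw [mul_comm (_ * _) (g s)]
        exact mul_le_mul_of_nonneg_left
          (mul_add_primitive_le hD hD0 ht'b hDN ⟨hs'.1, hs.2.trans ht₀t'⟩) (hg0 s hs')
    _ = (1 + (b - a)) * N ^ 2 * ∫ s in t..t₀, g s := intervalIntegral.integral_const_mul _ _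
    _ ≤ (1 + (b - a)) * N ^ 2 * ∫ s in t..t', g s := by
        gcongr
        · exact mul_nonneg (by linarith [ht.trans (htt₀.trans (ht₀t'.trans ht'b))]) (sq_nonneg N)
        exact intervalIntegral.integral_mono_interval le_rfl htt₀ ht₀t'
          (ae_restrict_of_forall_mem measurableSet_Ioc fun s hs =>
            hg0 s ⟨ht.trans hs.1.le, hs.2.trans ht'b⟩)
          (hg.intervalIntegrable_of_Icc_subset (htt₀.trans ht₀t') (Icc_subset_Icc ht ht'b))

theorem eventually_nhdsGT_eq_zero_of_sq_le_integral (hD : ContinuousOn D (Icc a b))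
    (hD0 : ∀ t ∈ Icc a b, 0 ≤ D t) (hg : IntegrableOn g (Icc a b)) (hg0 : ∀ t ∈ Icc a b, 0 ≤ g t)
    (h : ∀ t ∈ Icc a b, D t ^ 2 ≤ ∫ s in a..t, g s * (D s * (D s + ∫ σ in a..s, D σ)))
    {t : ℝ} (ht : t ∈ Ico a b) (hzero : ∀ s ∈ Icc a t, D s = 0) :
    ∀ᶠ s in 𝓝[>] t, D s = 0 := by
  set K := 1 + (b - a)
  have hK : 0 < K := by linarith [ht.1, ht.2]
  obtain ⟨t', hsmall, htt', ht'b⟩ : ∃ t', ∫ s in t..t', g s < 1 / (2 * K) ∧ t < t' ∧ t' ≤ b :=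
    ((eventually_nhdsGT_intervalIntegral_lt ht.2 (hg.mono_set (Icc_subset_Icc_left ht.1))
      (by positivity)).and (Ioc_mem_nhdsGT ht.2)).exists
  suffices ∀ s ∈ Icc t t', D s = 0 from
    eventually_of_mem (Ioo_mem_nhdsGT htt') fun s hs => this s (Ioo_subset_Icc_self hs)
  -- The maximum `N` of `D` on `[t, t']` satisfies `N² ≤ K N² ∫_t^{t'} g ≤ N² / 2`.
  obtain ⟨t₀, ht₀, hmax⟩ := isCompact_Icc.exists_isMaxOn (nonempty_Icc.mpr htt'.le)
    (hD.mono (Icc_subset_Icc ht.1 ht'b))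
  have ht₀' : t₀ ∈ Icc a b := ⟨ht.1.trans ht₀.1, ht₀.2.trans ht'b⟩
  have hDN : ∀ s ∈ Icc a t', D s ≤ D t₀ := fun s hs => by
    rcases le_or_gt s t with hst | hts
    · exact (hzero s ⟨hs.1, hst⟩).trans_le (hD0 t₀ ht₀')
    · exact hmax ⟨hts.le, hs.2⟩
  have hsq : D t₀ ^ 2 ≤ D t₀ ^ 2 / 2 := by
    calc D t₀ ^ 2 ≤ K * D t₀ ^ 2 * ∫ s in t..t', g s := (h t₀ ht₀').trans
          (integral_mul_mul_add_primitive_le hD hD0 hg hg0 ht.1 ht₀.1 ht₀.2 ht'b hzero hDN)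
      _ ≤ K * D t₀ ^ 2 * (1 / (2 * K)) := by gcongr
      _ = D t₀ ^ 2 / 2 := by field_simp
  have hN : D t₀ = 0 := by nlinarith
  exact fun s hs => le_antisymm (hN ▸ hDN s ⟨ht.1.trans hs.1, hs.2⟩)
    (hD0 s ⟨ht.1.trans hs.1, hs.2.trans ht'b⟩)

theorem eqOn_zero_of_sq_le_integral (hD : ContinuousOn D (Icc a b))
    (hD0 : ∀ t ∈ Icc a b, 0 ≤ D t) (hg : IntegrableOn g (Icc a b))
    (h : ∀ t ∈ Icc a b, D t ^ 2 ≤ ∫ s in a..t, g s * (D s * (D s + ∫ σ in a..s, D σ))) :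
    EqOn D 0 (Icc a b) := by
  rcases lt_or_ge b a with hba | hab
  · simp [Icc_eq_empty_of_lt hba]
  -- Replacing `g` by its positive part keeps the inequality, since the other factor is `≥ 0`.
  have hg' : IntegrableOn (fun s => max (g s) 0) (Icc a b) := hg.pos_part
  have h' : ∀ t ∈ Icc a b,
      D t ^ 2 ≤ ∫ s in a..t, max (g s) 0 * (D s * (D s + ∫ σ in a..s, D σ)) := fun t ht =>
    (h t ht).trans <| intervalIntegral.integral_mono_on ht.1
      (intervalIntegrable_mul_mul_add_primitive hD hg ht.1 (Icc_subset_Icc_right ht.2))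
      (intervalIntegrable_mul_mul_add_primitive hD hg' ht.1 (Icc_subset_Icc_right ht.2))
      fun s hs => mul_le_mul_of_nonneg_right (le_max_left _ _)
        (mul_add_primitive_nonneg hD0 ⟨hs.1, hs.2.trans ht.2⟩)
  have hclosed : IsClosed (D ⁻¹' {0} ∩ Icc a b) := by
    rw [inter_comm]; exact hD.preimage_isClosed_of_isClosed isClosed_Icc isClosed_singleton
  have ha : D a = 0 := by
    have := h a (left_mem_Icc.mpr hab)
    simp only [intervalIntegral.integral_same] at this
    nlinarith
  exact hclosed.Icc_subset_of_forall_mem_nhdsGT_of_Icc_subset ha fun t ht hzero =>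
    eventually_nhdsGT_eq_zero_of_sq_le_integral hD hD0 hg' (fun _ _ => le_max_right _ _) h' ht
      hzero

end Gronwall

/-- The set `Q_Δ` of the paper. -/
def lowerTriangle (a b : ℝ) : Set (ℝ × ℝ) := {p | p.1 ∈ Icc a b ∧ p.2 ∈ Icc a b ∧ p.2 ≤ p.1}

section LowerTriangle

variable {E : Type*} [NormedAddCommGroup E] {β : ℝ → ℝ → E} {a b : ℝ}

theorem measurableSet_lowerTriangle : MeasurableSet (lowerTriangle a b) :=
  (measurable_fst measurableSet_Icc).inter
    ((measurable_snd measurableSet_Icc).inter (measurableSet_le measurable_snd measurable_fst))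

theorem indicator_lowerTriangle_apply {t : ℝ} (ht : t ∈ Icc a b) :
    (fun σ => (lowerTriangle a b).indicator (fun p => β p.1 p.2) (t, σ))
      = (Icc a t).indicator (β t) := by
  ext σ
  by_cases hσ : σ ∈ Icc a t
  · rw [indicator_of_mem hσ, indicator_of_mem
      (show (t, σ) ∈ lowerTriangle a b from ⟨ht, ⟨hσ.1, hσ.2.trans ht.2⟩, hσ.2⟩)]
  · rw [indicator_of_notMem hσ, indicator_of_notMem fun hp => hσ ⟨hp.2.1.1, hp.2.2⟩]

theorem intervalIntegrable_integral_lowerTriangle_section [NormedSpace ℝ E]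
    (hβ : IntegrableOn (fun p : ℝ × ℝ => β p.1 p.2) (lowerTriangle a b)) (hab : a ≤ b) :
    IntervalIntegrable (fun t => ∫ σ in a..t, β t σ) volume a b := by
  have hint := ((integrable_indicator_iff measurableSet_lowerTriangle).mpr hβ)
  rw [Measure.volume_eq_prod] at hint
  refine (intervalIntegrable_iff_integrableOn_Icc_of_le hab).mpr
    (hint.integral_prod_left.integrableOn.congr_fun (fun t ht => ?_) measurableSet_Icc)
  simp only [indicator_lowerTriangle_apply ht, integral_indicator measurableSet_Icc,
    intervalIntegral.integral_of_le ht.1, integral_Icc_eq_integral_Ioc]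

theorem ae_intervalIntegrable_lowerTriangle_section
    (hβ : IntegrableOn (fun p : ℝ × ℝ => β p.1 p.2) (lowerTriangle a b)) :
    ∀ᵐ t, t ∈ Icc a b → IntervalIntegrable (β t) volume a t := by
  have hint := ((integrable_indicator_iff measurableSet_lowerTriangle).mpr hβ)
  rw [Measure.volume_eq_prod] at hint
  filter_upwards [hint.prod_right_ae] with t ht htab
  rw [indicator_lowerTriangle_apply htab, integrable_indicator_iff measurableSet_Icc] at ht
  exact (intervalIntegrable_iff_integrableOn_Icc_of_le htab.1).mpr ht

end LowerTriangle

namespace IsIDSweepingSol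

variable {E : Type*} [NormedAddCommGroup E] [InnerProductSpace ℝ E]
  {T0 T : ℝ} {C : ℝ → Set E} {f1 : ℝ → E → E} {f2 : ℝ → ℝ → E → E}

theorem intervalIntegrable_of_mem {x x' : ℝ → E} (hx : IsIDSweepingSol T0 T C f1 f2 x x') {t : ℝ}
    (ht : t ∈ Icc T0 T) : IntervalIntegrable x' volume T0 t :=
  hx.1.mono_set (uIcc_subset_uIcc_left (mem_uIcc_of_le ht.1 ht.2))

theorem continuousOn {x x' : ℝ → E} (hx : IsIDSweepingSol T0 T C f1 f2 x x') :
    ContinuousOn x (Icc T0 T) := by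
  rcases lt_or_ge T T0 with hT | hT
  · simp [Icc_eq_empty_of_lt hT]
  have hprim := intervalIntegral.continuousOn_primitive_interval
    ((intervalIntegrable_iff_integrableOn_Icc_of_le hT).mp hx.1 |>.mono_set (uIcc_of_le hT).subset)
  rw [uIcc_of_le hT] at hprim
  exact (continuousOn_const.add hprim).congr hx.2.1

variable {x₁ x₁' x₂ x₂' : ℝ → E}

theorem sub_eq_integral (h₁ : IsIDSweepingSol T0 T C f1 f2 x₁ x₁')
    (h₂ : IsIDSweepingSol T0 T C f1 f2 x₂ x₂') (hinit : x₁ T0 = x₂ T0) {t : ℝ}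
    (ht : t ∈ Icc T0 T) : x₁ t - x₂ t = ∫ s in T0..t, (x₁' s - x₂' s) := by
  rw [h₁.2.1 t ht, h₂.2.1 t ht, hinit, intervalIntegral.integral_sub
    (h₁.intervalIntegrable_of_mem ht) (h₂.intervalIntegrable_of_mem ht), add_sub_add_left_eq_sub]

theorem norm_sub_sq_eq [CompleteSpace E] (h₁ : IsIDSweepingSol T0 T C f1 f2 x₁ x₁')
    (h₂ : IsIDSweepingSol T0 T C f1 f2 x₂ x₂') (hinit : x₁ T0 = x₂ T0) {t : ℝ}
    (ht : t ∈ Icc T0 T) :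
    IntervalIntegrable (fun s => ⟪x₁' s - x₂' s, x₁ s - x₂ s⟫) volume T0 t ∧
      ‖x₁ t - x₂ t‖ ^ 2 = 2 * ∫ s in T0..t, ⟪x₁' s - x₂' s, x₁ s - x₂ s⟫ := by
  have hu := ((h₁.intervalIntegrable_of_mem ht).sub (h₂.intervalIntegrable_of_mem ht)).1
  have hw : ∀ s ∈ Ioc T0 t,
      ∫ σ in Ioc T0 s, (x₁' σ - x₂' σ) = x₁ s - x₂ s := fun s hs => by
    rw [sub_eq_integral h₁ h₂ hinit ⟨hs.1.le, hs.2.trans ht.2⟩,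
      intervalIntegral.integral_of_le hs.1.le]
  rw [intervalIntegrable_iff_integrableOn_Ioc_of_le ht.1, intervalIntegral.integral_of_le ht.1,
    sub_eq_integral h₁ h₂ hinit ht, intervalIntegral.integral_of_le ht.1,
    norm_setIntegral_Ioc_sq_eq_two_mul_integral_inner hu,
    ← setIntegral_congr_fun measurableSet_Ioc fun s hs => congrArg _ (hw s hs)]
  exact ⟨(integrableOn_inner_primitive hu).congr_fun (fun s hs => by simp only [hw s hs])
    measurableSet_Ioc, rfl⟩

theorem norm_sub_sq_le_integral [CompleteSpace E]
    (h₁ : IsIDSweepingSol T0 T C f1 f2 x₁ x₁') (h₂ : IsIDSweepingSol T0 T C f1 f2 x₂ x₂')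
    (hinit : x₁ T0 = x₂ T0) {ρ : ℝ → ℝ} (hρ : IntegrableOn ρ (Icc T0 T))
    (hineq : ∀ᵐ t, t ∈ Icc T0 T → ⟪x₁' t - x₂' t, x₁ t - x₂ t⟫ ≤
      ρ t * (‖x₁ t - x₂ t‖ * (‖x₁ t - x₂ t‖ + ∫ s in T0..t, ‖x₁ s - x₂ s‖))) :
    ∀ t ∈ Icc T0 T, ‖x₁ t - x₂ t‖ ^ 2 ≤ ∫ s in T0..t,
      2 * ρ s * (‖x₁ s - x₂ s‖ * (‖x₁ s - x₂ s‖ + ∫ σ in T0..s, ‖x₁ σ - x₂ σ‖)) := by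
  intro t ht
  obtain ⟨hint, heq⟩ := norm_sub_sq_eq h₁ h₂ hinit ht
  have hsub : Icc T0 t ⊆ Icc T0 T := Icc_subset_Icc_right ht.2
  rw [heq, ← intervalIntegral.integral_const_mul]
  refine intervalIntegral.integral_mono_ae_restrict ht.1 (hint.const_mul 2)
    (intervalIntegrable_mul_mul_add_primitive (h₁.continuousOn.sub h₂.continuousOn).norm
      (hρ.const_mul 2) ht.1 hsub) ?_
  filter_upwards [ae_restrict_mem measurableSet_Icc, ae_restrict_of_ae hineq] with s hs hρs
  linarith [hρs (hsub hs)]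

end IsIDSweepingSol

section Perturbation

variable {E : Type*} [NormedAddCommGroup E]
  {T0 T t η : ℝ} {C : ℝ → Set E} {f1 : ℝ → E → E} {f2 : ℝ → ℝ → E → E} {β1 : ℝ → ℝ}
  {β2 : ℝ → ℝ → ℝ} {L1 L2 : ℝ → ℝ} {x x₁ x₂ : ℝ → E}

def sweepingPerturbation [NormedSpace ℝ E] (T0 : ℝ) (f1 : ℝ → E → E) (f2 : ℝ → ℝ → E → E)
    (x : ℝ → E) (t : ℝ) : E :=
  f1 t (x t) + ∫ s in T0..t, f2 t s (x s)

theorem norm_sweepingPerturbation_le [NormedSpace ℝ E] (ht : t ∈ Icc T0 T)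
    (hxC : ∀ s ∈ Icc T0 T, x s ∈ C s) (hxη : ∀ s ∈ Icc T0 T, ‖x s‖ ≤ η) (hβ1 : 0 ≤ β1 t)
    (hf1 : ∀ y ∈ ⋃ s ∈ Icc T0 T, C s, ‖f1 t y‖ ≤ β1 t * (1 + ‖y‖))
    (hβ2 : ∀ s ∈ Icc T0 t, 0 ≤ β2 t s)
    (hf2 : ∀ s ∈ Icc T0 t, ∀ y ∈ ⋃ u ∈ Icc T0 T, C u, ‖f2 t s y‖ ≤ β2 t s * (1 + ‖y‖))
    (hβ2t : IntervalIntegrable (β2 t) volume T0 t) :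
    ‖sweepingPerturbation T0 f1 f2 x t‖ ≤ (1 + η) * (β1 t + ∫ s in T0..t, β2 t s) := by
  have hxs : ∀ s ∈ Icc T0 T, x s ∈ ⋃ u ∈ Icc T0 T, C u := fun s hs => mem_biUnion hs (hxC s hs)
  have h1 : ‖f1 t (x t)‖ ≤ β1 t * (1 + η) :=
    (hf1 _ (hxs t ht)).trans (by gcongr; exact hxη t ht)
  have h2 : ‖∫ s in T0..t, f2 t s (x s)‖ ≤ ∫ s in T0..t, β2 t s * (1 + η) := by
    refine intervalIntegral.norm_integral_le_of_norm_le ht.1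
      (Eventually.of_forall fun s hs => ?_) (hβ2t.mul_const _)
    have hs' : s ∈ Icc T0 T := ⟨hs.1.le, hs.2.trans ht.2⟩
    exact (hf2 s (Ioc_subset_Icc_self hs) _ (hxs s hs')).trans
      (by gcongr; exacts [hβ2 s (Ioc_subset_Icc_self hs), hxη s hs'])
  rw [intervalIntegral.integral_mul_const] at h2
  calc _ ≤ ‖f1 t (x t)‖ + ‖∫ s in T0..t, f2 t s (x s)‖ := norm_add_le _ _
    _ ≤ _ := by linarith

theorem intervalIntegrable_kernel_comp (ht : t ∈ Icc T0 T)
    (hf2meas : ∀ y : E, StronglyMeasurable fun p : ℝ × ℝ => f2 p.1 p.2 y)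
    (hL2 : ∀ s ∈ Icc T0 t, ∀ y ∈ Metric.closedBall (0 : E) η,
      ∀ z ∈ Metric.closedBall (0 : E) η, ‖f2 t s y - f2 t s z‖ ≤ L2 t * ‖y - z‖)
    (hx : ContinuousOn x (Icc T0 T)) (hxC : ∀ s ∈ Icc T0 T, x s ∈ C s)
    (hxη : ∀ s ∈ Icc T0 T, ‖x s‖ ≤ η) (hβ2 : ∀ s ∈ Icc T0 t, 0 ≤ β2 t s)
    (hf2 : ∀ s ∈ Icc T0 t, ∀ y ∈ ⋃ u ∈ Icc T0 T, C u, ‖f2 t s y‖ ≤ β2 t s * (1 + ‖y‖))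
    (hβ2t : IntervalIntegrable (β2 t) volume T0 t) :
    IntervalIntegrable (fun s => f2 t s (x s)) volume T0 t := by
  have hsub : Icc T0 t ⊆ Icc T0 T := Icc_subset_Icc_right ht.2
  refine (intervalIntegrable_iff_integrableOn_Icc_of_le ht.1).mpr
    (integrableOn_comp_of_continuousOn (K := Metric.closedBall 0 η) (β := fun s => β2 t s * (1 + η))
      ht.1 (fun y => (hf2meas y).comp_measurable measurable_prodMk_left)
      (fun s hs => (LipschitzOnWith.of_dist_le' fun y hy z hz => by
        simpa only [dist_eq_norm] using hL2 s hs y hy z hz).continuousOn)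
      (hx.mono hsub) (fun s hs => mem_closedBall_zero_iff.mpr (hxη s (hsub hs)))
      (((intervalIntegrable_iff_integrableOn_Icc_of_le ht.1).mp hβ2t).mul_const _) fun s hs => ?_)
  exact (hf2 s hs _ (mem_biUnion (hsub hs) (hxC s (hsub hs)))).trans
    (by gcongr; exacts [hβ2 s hs, hxη s (hsub hs)])

theorem norm_sweepingPerturbation_sub_le [NormedSpace ℝ E] (ht : t ∈ Icc T0 T)
    (hL1 : ∀ y ∈ Metric.closedBall (0 : E) η, ∀ z ∈ Metric.closedBall (0 : E) η,
      ‖f1 t y - f1 t z‖ ≤ L1 t * ‖y - z‖)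
    (hL2 : ∀ s ∈ Icc T0 t, ∀ y ∈ Metric.closedBall (0 : E) η,
      ∀ z ∈ Metric.closedBall (0 : E) η, ‖f2 t s y - f2 t s z‖ ≤ L2 t * ‖y - z‖)
    (hx₁ : ContinuousOn x₁ (Icc T0 T)) (hx₂ : ContinuousOn x₂ (Icc T0 T))
    (hx₁η : ∀ s ∈ Icc T0 T, ‖x₁ s‖ ≤ η) (hx₂η : ∀ s ∈ Icc T0 T, ‖x₂ s‖ ≤ η)
    (hI₁ : IntervalIntegrable (fun s => f2 t s (x₁ s)) volume T0 t)
    (hI₂ : IntervalIntegrable (fun s => f2 t s (x₂ s)) volume T0 t) :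
    ‖sweepingPerturbation T0 f1 f2 x₁ t - sweepingPerturbation T0 f1 f2 x₂ t‖
      ≤ L1 t * ‖x₁ t - x₂ t‖ + L2 t * ∫ s in T0..t, ‖x₁ s - x₂ s‖ := by
  have hball : ∀ {y : ℝ → E}, (∀ s ∈ Icc T0 T, ‖y s‖ ≤ η) → ∀ s ∈ Icc T0 T,
      y s ∈ Metric.closedBall (0 : E) η := fun hy s hs => mem_closedBall_zero_iff.mpr (hy s hs)
  have hD : IntervalIntegrable (fun s => ‖x₁ s - x₂ s‖) volume T0 t :=
    ((hx₁.sub hx₂).norm.mono (Icc_subset_Icc_right ht.2)).intervalIntegrable_of_Icc ht.1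
  have h2 : ‖(∫ s in T0..t, f2 t s (x₁ s)) - ∫ s in T0..t, f2 t s (x₂ s)‖
      ≤ ∫ s in T0..t, L2 t * ‖x₁ s - x₂ s‖ := by
    rw [← intervalIntegral.integral_sub hI₁ hI₂]
    refine intervalIntegral.norm_integral_le_of_norm_le ht.1
      (Eventually.of_forall fun s hs => ?_) (hD.const_mul _)
    have hs' : s ∈ Icc T0 T := ⟨hs.1.le, hs.2.trans ht.2⟩
    exact hL2 s (Ioc_subset_Icc_self hs) _ (hball hx₁η s hs') _ (hball hx₂η s hs')
  rw [intervalIntegral.integral_const_mul] at h2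
  calc _ = ‖(f1 t (x₁ t) - f1 t (x₂ t))
        + ((∫ s in T0..t, f2 t s (x₁ s)) - ∫ s in T0..t, f2 t s (x₂ s))‖ := by
        rw [sweepingPerturbation, sweepingPerturbation, add_sub_add_comm]
    _ ≤ _ := (norm_add_le _ _).trans
        (add_le_add (hL1 _ (hball hx₁η t ht) _ (hball hx₂η t ht)) h2)

end Perturbation

namespace IsIDSweepingSol

variable {E : Type*} [NormedAddCommGroup E] [InnerProductSpace ℝ E]
  {T0 T η : ℝ} {r : ℝ≥0∞} {C : ℝ → Set E} {f1 : ℝ → E → E} {f2 : ℝ → ℝ → E → E}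
  {β1 L1 L2 : ℝ → ℝ} {β2 : ℝ → ℝ → ℝ} {x₁ x₁' x₂ x₂' : ℝ → E}

theorem ae_inner_sub_le (hC : ∀ t ∈ Icc T0 T, IsProxRegular r (C t))
    (h₁ : IsIDSweepingSol T0 T C f1 f2 x₁ x₁') (h₂ : IsIDSweepingSol T0 T C f1 f2 x₂ x₂')
    (hx₁η : ∀ s ∈ Icc T0 T, ‖x₁ s‖ ≤ η) (hx₂η : ∀ s ∈ Icc T0 T, ‖x₂ s‖ ≤ η)
    (hβ1nn : ∀ t ∈ Icc T0 T, 0 ≤ β1 t)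
    (hf1grow : ∀ t ∈ Icc T0 T, ∀ x ∈ ⋃ s ∈ Icc T0 T, C s, ‖f1 t x‖ ≤ β1 t * (1 + ‖x‖))
    (hL1nn : ∀ t ∈ Icc T0 T, 0 ≤ L1 t)
    (hL1 : ∀ t ∈ Icc T0 T, ∀ x ∈ Metric.closedBall (0 : E) η,
      ∀ y ∈ Metric.closedBall (0 : E) η, ‖f1 t x - f1 t y‖ ≤ L1 t * ‖x - y‖)
    (hf2meas : ∀ x : E, StronglyMeasurable fun p : ℝ × ℝ => f2 p.1 p.2 x)
    (hβ2 : ∀ᵐ t, t ∈ Icc T0 T → IntervalIntegrable (β2 t) volume T0 t)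
    (hβ2nn : ∀ t ∈ Icc T0 T, ∀ s ∈ Icc T0 t, 0 ≤ β2 t s)
    (hf2grow : ∀ t ∈ Icc T0 T, ∀ s ∈ Icc T0 t, ∀ x ∈ ⋃ u ∈ Icc T0 T, C u,
      ‖f2 t s x‖ ≤ β2 t s * (1 + ‖x‖))
    (hL2nn : ∀ t ∈ Icc T0 T, 0 ≤ L2 t)
    (hL2 : ∀ t ∈ Icc T0 T, ∀ s ∈ Icc T0 t, ∀ x ∈ Metric.closedBall (0 : E) η,
      ∀ y ∈ Metric.closedBall (0 : E) η, ‖f2 t s x - f2 t s y‖ ≤ L2 t * ‖x - y‖) :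
    ∀ᵐ t, t ∈ Icc T0 T → ⟪x₁' t - x₂' t, x₁ t - x₂ t⟫ ≤
      (((2 * r)⁻¹).toReal * (‖x₁' t‖ + ‖x₂' t‖ + 2 * ((1 + η) * (β1 t + ∫ s in T0..t, β2 t s)))
        + L1 t + L2 t) * (‖x₁ t - x₂ t‖ * (‖x₁ t - x₂ t‖ + ∫ s in T0..t, ‖x₁ s - x₂ s‖)) := by
  filter_upwards [h₁.2.2.2, h₂.2.2.2, hβ2] with t hv₁ hv₂ hβ2t ht
  have hB₁ := norm_sweepingPerturbation_le ht h₁.2.2.1 hx₁η (hβ1nn t ht) (hf1grow t ht)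
    (hβ2nn t ht) (hf2grow t ht) (hβ2t ht)
  have hB₂ := norm_sweepingPerturbation_le ht h₂.2.2.1 hx₂η (hβ1nn t ht) (hf1grow t ht)
    (hβ2nn t ht) (hf2grow t ht) (hβ2t ht)
  have hΔ := norm_sweepingPerturbation_sub_le ht (hL1 t ht) (hL2 t ht) h₁.continuousOn
    h₂.continuousOn hx₁η hx₂η
    (intervalIntegrable_kernel_comp ht hf2meas (hL2 t ht) h₁.continuousOn h₁.2.2.1 hx₁η
      (hβ2nn t ht) (hf2grow t ht) (hβ2t ht))
    (intervalIntegrable_kernel_comp ht hf2meas (hL2 t ht) h₂.continuousOn h₂.2.2.1 hx₂η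
      (hβ2nn t ht) (hf2grow t ht) (hβ2t ht))
  have key := (hC t ht).inner_sub_le (p₁ := sweepingPerturbation T0 f1 f2 x₁ t)
    (p₂ := sweepingPerturbation T0 f1 f2 x₂ t) (h₁.2.2.1 t ht) (h₂.2.2.1 t ht)
    (by rw [sweepingPerturbation, ← sub_sub]; exact hv₁ ht)
    (by rw [sweepingPerturbation, ← sub_sub]; exact hv₂ ht)
  set c := ((2 * r)⁻¹).toReal
  set D := ‖x₁ t - x₂ t‖
  set I := ∫ s in T0..t, ‖x₁ s - x₂ s‖
  have hc : 0 ≤ c := ENNReal.toReal_nonneg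
  have hD : 0 ≤ D := norm_nonneg _
  have hI : 0 ≤ I := intervalIntegral.integral_nonneg ht.1 fun _ _ => norm_nonneg _
  have hB : 0 ≤ (1 + η) * (β1 t + ∫ s in T0..t, β2 t s) := (norm_nonneg _).trans hB₁
  have hcA : 0 ≤ c * (‖x₁' t‖ + ‖x₂' t‖ + 2 * ((1 + η) * (β1 t + ∫ s in T0..t, β2 t s))) := by
    positivity
  calc _ ≤ c * (‖x₁' t‖ + ‖x₂' t‖ + 2 * ((1 + η) * (β1 t + ∫ s in T0..t, β2 t s))) * D ^ 2
        + (L1 t * D + L2 t * I) * D := by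
        refine key.trans (add_le_add ?_ (mul_le_mul_of_nonneg_right hΔ hD))
        exact mul_le_mul_of_nonneg_right (mul_le_mul_of_nonneg_left (by linarith) hc) (sq_nonneg D)
    _ ≤ _ := by
        nlinarith [mul_nonneg (mul_nonneg hcA hD) hI, mul_nonneg (mul_nonneg (hL1nn t ht) hD) hI,
          mul_nonneg (hL2nn t ht) (sq_nonneg D)]

end IsIDSweepingSol

theorem integro_differential_sweeping_uniqueness_general
    (T0 T : ℝ) (hT : T0 < T)
    (r : ℝ≥0∞)
    (C : ℝ → Set H)
    (hC : ∀ t ∈ Icc T0 T, (C t).Nonempty ∧ IsClosed (C t) ∧ IsProxRegular r (C t))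
    (f1 : ℝ → H → H)
    (β1 : ℝ → ℝ)
    (hβ1int : IntervalIntegrable β1 volume T0 T)
    (hβ1nn : ∀ t ∈ Icc T0 T, 0 ≤ β1 t)
    (hf1grow : ∀ t ∈ Icc T0 T, ∀ x ∈ ⋃ s ∈ Icc T0 T, C s, ‖f1 t x‖ ≤ β1 t * (1 + ‖x‖))
    (hf1lip : ∀ η : ℝ, 0 < η → ∃ L1 : ℝ → ℝ, IntervalIntegrable L1 volume T0 T ∧
      (∀ t ∈ Icc T0 T, 0 ≤ L1 t) ∧
      ∀ t ∈ Icc T0 T, ∀ x ∈ Metric.closedBall (0 : H) η,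
        ∀ y ∈ Metric.closedBall (0 : H) η, ‖f1 t x - f1 t y‖ ≤ L1 t * ‖x - y‖)
    (f2 : ℝ → ℝ → H → H)
    (hf2meas : ∀ x : H, StronglyMeasurable fun p : ℝ × ℝ => f2 p.1 p.2 x)
    (β2 : ℝ → ℝ → ℝ)
    (hβ2int : IntegrableOn (fun p : ℝ × ℝ => β2 p.1 p.2)
      {p : ℝ × ℝ | p.1 ∈ Icc T0 T ∧ p.2 ∈ Icc T0 T ∧ p.2 ≤ p.1} volume)
    (hβ2nn : ∀ t ∈ Icc T0 T, ∀ s ∈ Icc T0 t, 0 ≤ β2 t s)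
    (hf2grow : ∀ t ∈ Icc T0 T, ∀ s ∈ Icc T0 t, ∀ x ∈ ⋃ u ∈ Icc T0 T, C u,
      ‖f2 t s x‖ ≤ β2 t s * (1 + ‖x‖))
    (hf2lip : ∀ η : ℝ, 0 < η → ∃ L2 : ℝ → ℝ, IntervalIntegrable L2 volume T0 T ∧
      (∀ t ∈ Icc T0 T, 0 ≤ L2 t) ∧
      ∀ t ∈ Icc T0 T, ∀ s ∈ Icc T0 t, ∀ x ∈ Metric.closedBall (0 : H) η,
        ∀ y ∈ Metric.closedBall (0 : H) η, ‖f2 t s x - f2 t s y‖ ≤ L2 t * ‖x - y‖)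
    (x1 x1' x2 x2' : ℝ → H) (hinit : x1 T0 = x2 T0)
    (h1 : IsIDSweepingSol T0 T C f1 f2 x1 x1')
    (h2 : IsIDSweepingSol T0 T C f1 f2 x2 x2') :
    ∀ t ∈ Icc T0 T, x1 t = x2 t := by
  obtain ⟨M, hM⟩ :=
    isCompact_Icc.exists_bound_of_continuousOn (h1.continuousOn.prodMk h2.continuousOn)
  set η := max M 1
  have hxη : ∀ s ∈ Icc T0 T, ‖x1 s‖ ≤ η ∧ ‖x2 s‖ ≤ η := fun s hs =>
    norm_prod_le_iff.mp ((hM s hs).trans (le_max_left _ _))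
  have hη : 0 < η := lt_max_of_lt_right one_pos
  obtain ⟨L1, hL1int, hL1nn, hL1⟩ := hf1lip η hη
  obtain ⟨L2, hL2int, hL2nn, hL2⟩ := hf2lip η hη
  have hineq := IsIDSweepingSol.ae_inner_sub_le (fun t ht => (hC t ht).2.2) h1 h2
    (fun s hs => (hxη s hs).1) (fun s hs => (hxη s hs).2) hβ1nn hf1grow hL1nn hL1 hf2meas
    (ae_intervalIntegrable_lowerTriangle_section hβ2int) hβ2nn hf2grow hL2nn hL2
  set ρ := fun t => ((2 * r)⁻¹).toReal * (‖x1' t‖ + ‖x2' t‖ +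
    2 * ((1 + η) * (β1 t + ∫ s in T0..t, β2 t s))) + L1 t + L2 t
  have hγ := intervalIntegrable_integral_lowerTriangle_section hβ2int hT.le
  have hρ : IntervalIntegrable ρ volume T0 T :=
    ((((h1.1.norm.add h2.1.norm).add (((hβ1int.add hγ).const_mul _).const_mul _)).const_mul _).add
      hL1int).add hL2int
  have hρ' := (intervalIntegrable_iff_integrableOn_Icc_of_le hT.le).mp hρ
  have hD := eqOn_zero_of_sq_le_integral (h1.continuousOn.sub h2.continuousOn).norm
    (fun _ _ => norm_nonneg _) (hρ'.const_mul 2)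
    (IsIDSweepingSol.norm_sub_sq_le_integral h1 h2 hinit hρ' hineq)
  exact fun t ht => sub_eq_zero.mp (norm_eq_zero.mp (hD ht))

/-- Uniqueness for the integro-differential sweeping process. -/
theorem integro_differential_sweeping_uniqueness
    (T0 T : ℝ) (hT : T0 < T)
    (r : ℝ≥0∞) (hr : 0 < r)
    (C : ℝ → Set H)
    (hC : ∀ t ∈ Icc T0 T, (C t).Nonempty ∧ IsClosed (C t) ∧ IsProxRegular r (C t))
    (υ υ' : ℝ → ℝ)
    (hυint : IntervalIntegrable υ' volume T0 T)
    (hυAC : ∀ t ∈ Icc T0 T, υ t = υ T0 + ∫ s in T0..t, υ' s)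
    (hmove : ∀ s ∈ Icc T0 T, ∀ t ∈ Icc T0 T,
      C t ⊆ C s + |υ s - υ t| • Metric.closedBall (0 : H) 1)
    (f1 : ℝ → H → H)
    (hf1meas : ∀ x : H, StronglyMeasurable fun t => f1 t x)
    (β1 : ℝ → ℝ)
    (hβ1int : IntervalIntegrable β1 volume T0 T)
    (hβ1nn : ∀ t ∈ Icc T0 T, 0 ≤ β1 t)
    (hf1grow : ∀ t ∈ Icc T0 T, ∀ x ∈ ⋃ s ∈ Icc T0 T, C s, ‖f1 t x‖ ≤ β1 t * (1 + ‖x‖))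
    (hf1lip : ∀ η : ℝ, 0 < η → ∃ L1 : ℝ → ℝ, IntervalIntegrable L1 volume T0 T ∧
      (∀ t ∈ Icc T0 T, 0 ≤ L1 t) ∧
      ∀ t ∈ Icc T0 T, ∀ x ∈ Metric.closedBall (0 : H) η,
        ∀ y ∈ Metric.closedBall (0 : H) η, ‖f1 t x - f1 t y‖ ≤ L1 t * ‖x - y‖)
    (f2 : ℝ → ℝ → H → H)
    (hf2meas : ∀ x : H, StronglyMeasurable fun p : ℝ × ℝ => f2 p.1 p.2 x)
    (β2 : ℝ → ℝ → ℝ)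
    (hβ2int : IntegrableOn (fun p : ℝ × ℝ => β2 p.1 p.2)
      {p : ℝ × ℝ | p.1 ∈ Icc T0 T ∧ p.2 ∈ Icc T0 T ∧ p.2 ≤ p.1} volume)
    (hβ2nn : ∀ t ∈ Icc T0 T, ∀ s ∈ Icc T0 t, 0 ≤ β2 t s)
    (hf2grow : ∀ t ∈ Icc T0 T, ∀ s ∈ Icc T0 t, ∀ x ∈ ⋃ u ∈ Icc T0 T, C u,
      ‖f2 t s x‖ ≤ β2 t s * (1 + ‖x‖))
    (hf2lip : ∀ η : ℝ, 0 < η → ∃ L2 : ℝ → ℝ, IntervalIntegrable L2 volume T0 T ∧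
      (∀ t ∈ Icc T0 T, 0 ≤ L2 t) ∧
      ∀ t ∈ Icc T0 T, ∀ s ∈ Icc T0 t, ∀ x ∈ Metric.closedBall (0 : H) η,
        ∀ y ∈ Metric.closedBall (0 : H) η, ‖f2 t s x - f2 t s y‖ ≤ L2 t * ‖x - y‖)
    (x1 x1' x2 x2' : ℝ → H) (hinit : x1 T0 = x2 T0)
    (h1 : IsIDSweepingSol T0 T C f1 f2 x1 x1')
    (h2 : IsIDSweepingSol T0 T C f1 f2 x2 x2') :
    ∀ t ∈ Icc T0 T, x1 t = x2 t :=
  integro_differential_sweeping_uniqueness_general T0 T hT r C hC f1 β1 hβ1int hβ1nn hf1grow hf1lip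
    f2 hf2meas β2 hβ2int hβ2nn hf2grow hf2lip x1 x1' x2 x2' hinit h1 h2
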